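/- arXiv:1802.04320 — 3 statements merged into one kernel-verified Lean document; each statement's English description precedes it below -/
import Mathlib

section
/- Let n ≥ 2 and let v ∈ S_n satisfy v ≤ c in the Bruhat order, where c = s_{n−1}s_{n−2}⋯s_2s_1. Then the Schubert ideal equals the degenerate Schubert ideal: I_v = J^a_v. Equivalently, for every Plücker relation R^k_{J,L}, the difference R^k_{J,L} − init(R^k_{J,L}) lies in the ideal ⟨p_I : I ≰ v([#I])⟩. -/
open Finset MvPolynomial

namespace DegSchubert

/-- The interval `[d] = {1,…,d}` (empty for `d = 0`). -/
def seg (d : ℕ) : Finset ℕ := Finset.Icc 1 d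

/-- Number of inversions of a list of naturals. -/
def inv : List ℕ → ℕ
  | [] => 0
  | a :: t => t.countP (fun b => decide (b < a)) + inv t

/-- Signed Plücker variable attached to a sequence: zero if two entries coincide,
otherwise the sign of the sorting permutation times the variable of the underlying set. -/
noncomputable def pseq (l : List ℕ) : MvPolynomial (Finset ℕ) ℂ :=
  if l.Nodup then ((-1 : ℂ) ^ inv l) • X l.toFinset else 0

/-- `J′`: replace the first `k` entries of `J` by the entries of `L` in the (0-indexed)
positions belonging to `R`, taken in increasing order. -/
def Jrep (J L : List ℕ) (k : ℕ) (R : Finset ℕ) : List ℕ :=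
  (R.sort (· ≤ ·)).map (fun r => L.getD r 0) ++ J.drop k

/-- `L′`: replace the entries of `L` in the (0-indexed) positions belonging to `R`
by the first `k` entries of `J`, in order. -/
def Lrep (L J : List ℕ) (R : Finset ℕ) : List ℕ :=
  (List.range L.length).map
    (fun p => if p ∈ R then J.getD ((R.filter (· < p)).card) 0 else L.getD p 0)

/-- The Plücker relation `R^k_{J,L}` (positions of `L` are 0-indexed). -/
noncomputable def pluecker (k : ℕ) (J L : List ℕ) : MvPolynomial (Finset ℕ) ℂ :=
  pseq J * pseq L -
    ∑ R ∈ (Finset.range L.length).powersetCard k, pseq (Jrep J L k R) * pseq (Lrep L J R)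

/-- Validity of the data `(k, J, L)` of a Plücker relation for `S_n`. -/
def ValidPair (n k : ℕ) (J L : List ℕ) : Prop :=
  J.Nodup ∧ L.Nodup ∧ (∀ a ∈ J, a ∈ seg n) ∧ (∀ a ∈ L, a ∈ seg n) ∧
    1 ≤ J.length ∧ J.length ≤ L.length ∧ L.length ≤ n - 1 ∧ 1 ≤ k ∧ k ≤ J.length

/-- Weight of a Plücker variable. -/
def wt (n : ℕ) (I : Finset ℕ) : ℕ := (I.filter (fun r => I.card ≤ r ∧ r ≤ n - 1)).card

/-- Weight of a monomial. -/
def mwt (n : ℕ) (m : Finset ℕ →₀ ℕ) : ℕ := m.sum (fun I e => e * wt n I)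

/-- The initial form of a polynomial: the sum of its terms of minimal weight. -/
noncomputable def initw (n : ℕ) (f : MvPolynomial (Finset ℕ) ℂ) : MvPolynomial (Finset ℕ) ℂ :=
  ∑ m ∈ f.support.filter (fun m => ∀ m' ∈ f.support, mwt n m ≤ mwt n m'),
    monomial m (f.coeff m)

/-- The componentwise ("dominance") order on finsets of naturals of equal size. -/
def domLE (A B : Finset ℕ) : Prop :=
  List.Forall₂ (· ≤ ·) (A.sort (· ≤ ·)) (B.sort (· ≤ ·))

/-- Valid index sets for Plücker variables. -/
def ValidIndex (n : ℕ) (I : Finset ℕ) : Prop :=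
  I.Nonempty ∧ I ⊆ seg n ∧ I.card ≤ n - 1

/-- The ideal generated by the Plücker variables vanishing on the Schubert variety `X_w`. -/
noncomputable def vanishIdeal (n : ℕ) (w : Equiv.Perm ℕ) : Ideal (MvPolynomial (Finset ℕ) ℂ) :=
  Ideal.span { f | ∃ I : Finset ℕ, ValidIndex n I ∧ ¬ domLE I ((seg I.card).image ⇑w) ∧ f = X I }

/-- The set of Plücker relations. -/
def plueckerSet (n : ℕ) : Set (MvPolynomial (Finset ℕ) ℂ) :=
  { f | ∃ k J L, ValidPair n k J L ∧ f = pluecker k J L }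

/-- The set of initial forms of the Plücker relations. -/
def initPlueckerSet (n : ℕ) : Set (MvPolynomial (Finset ℕ) ℂ) :=
  { f | ∃ k J L, ValidPair n k J L ∧ f = initw n (pluecker k J L) }

/-- The Schubert ideal `I_w`. -/
noncomputable def schubIdeal (n : ℕ) (w : Equiv.Perm ℕ) : Ideal (MvPolynomial (Finset ℕ) ℂ) :=
  Ideal.span (plueckerSet n) ⊔ vanishIdeal n w

/-- The degenerate Schubert ideal `J^a_w`. -/
noncomputable def degIdeal (n : ℕ) (w : Equiv.Perm ℕ) : Ideal (MvPolynomial (Finset ℕ) ℂ) :=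
  Ideal.span (initPlueckerSet n) ⊔ vanishIdeal n w

/-- `J^a_w` contains a product of two Plücker variables. -/
def ContainsDeg2Mono (n : ℕ) (w : Equiv.Perm ℕ) : Prop :=
  ∃ A B : Finset ℕ, ValidIndex n A ∧ ValidIndex n B ∧ X A * X B ∈ degIdeal n w

/-- `u^{i,j} = #{a ∈ [i] : u(a) ≥ j}`. -/
def uij (u : Equiv.Perm ℕ) (i j : ℕ) : ℕ := ((seg i).filter (fun a => j ≤ u a)).card

/-- Bruhat order on `S_n`. -/
def bruhatLE (n : ℕ) (v u : Equiv.Perm ℕ) : Prop :=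
  ∀ i ∈ seg n, ∀ j ∈ seg n, uij v i j ≤ uij u i j

/-- The Plücker relation `R^k_{J,L}` degenerates to a monomial on `X_u`: the image of its
initial form in the quotient by the vanishing Plücker variables is a nonzero scalar multiple
of a single monomial. -/
def DegToMono (n : ℕ) (u : Equiv.Perm ℕ) (k : ℕ) (J L : List ℕ) : Prop :=
  ∃ (m : Finset ℕ →₀ ℕ) (a : ℂ),
    Ideal.Quotient.mk (vanishIdeal n u) (initw n (pluecker k J L)) =
      Ideal.Quotient.mk (vanishIdeal n u) (monomial m a) ∧
    Ideal.Quotient.mk (vanishIdeal n u) (monomial m a) ≠ 0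

/-- `F(K) ≤ u([#K])` for a sequence `K`. -/
def seqLE (u : Equiv.Perm ℕ) (K : List ℕ) : Prop :=
  domLE K.toFinset ((seg K.length).image ⇑u)

/-
Every monomial of `R^k_{J,L}` is `p_A p_B` with `(A, B)` obtained from `(J, L)` by exchanging
entries, so `#A = #J`, `#B = #L`, and the number of occurrences of `n` in `A` and `B` together is
the same for all monomials. Adding that number to the weight of `p_A p_B` gives
`#{a ∈ A | #A ≤ a} + #{b ∈ B | #B ≤ b}`, and each summand is at least `1`. If `p_A` does not vanish
on `X_v`, then `A ≤ v([#A])`; since `c([t]) = {n} ∪ [t - 1]`, the Bruhat bound `v ≤ c` forces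
`[#A - 1] ⊆ A`, so the summand for `A` is exactly `1`. Hence every monomial of non-minimal weight
contains a variable vanishing on `X_v`.
-/

lemma map_getD_range_eq_take (l : List ℕ) {k : ℕ} (hk : k ≤ l.length) :
    (List.range k).map (l.getD · 0) = l.take k :=
  List.ext_getElem (by simpa) fun i _ h => by
    simp only [List.length_take] at h
    simp [List.getElem?_eq_getElem (show i < l.length by omega)]

lemma coe_take_eq_map_getD (l : List ℕ) {k : ℕ} (hk : k ≤ l.length) :
    (l.take k : Multiset ℕ) = (range k).val.map (l.getD · 0) := by
  rw [← map_getD_range_eq_take l hk, ← Multiset.map_coe]; rfl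

lemma injOn_card_filter_lt (R : Finset ℕ) :
    Set.InjOn (fun p => #{q ∈ R | q < p}) R := by
  have hmono : ∀ p ∈ R, ∀ q, p < q → #{r ∈ R | r < p} < #{r ∈ R | r < q} := fun p hp q hpq =>
    card_lt_card <| (ssubset_iff_of_subset (monotone_filter_right R fun a ha => by omega)).2
      ⟨p, by simp [hp, hpq], by simp⟩
  intro p hp q hq h
  rcases lt_trichotomy p q with h' | h' | h'
  · exact absurd h (hmono p hp q h').ne
  · exact h'
  · exact absurd h.symm (hmono q hq p h').ne

lemma image_card_filter_lt (R : Finset ℕ) :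
    R.image (fun p => #{q ∈ R | q < p}) = range #R := by
  refine eq_of_subset_of_card_le (fun i hi => ?_) ?_
  · obtain ⟨p, hp, rfl⟩ := mem_image.1 hi
    exact mem_range.2 <| card_lt_card <|
      (ssubset_iff_of_subset (filter_subset _ _)).2 ⟨p, hp, by simp⟩
  · rw [card_image_of_injOn (injOn_card_filter_lt R), card_range]

lemma length_Jrep (J L : List ℕ) {k : ℕ} (R : Finset ℕ) (hR : #R = k) (hk : k ≤ J.length) :
    (Jrep J L k R).length = J.length := by
  simp [Jrep, hR]; omega

lemma length_Lrep (L J : List ℕ) (R : Finset ℕ) : (Lrep L J R).length = L.length := by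
  simp [Lrep]

lemma Jrep_append_Lrep_perm (J L : List ℕ) {k : ℕ} {R : Finset ℕ} (hRL : R ⊆ range L.length)
    (hR : #R = k) (hk : k ≤ J.length) :
    (Jrep J L k R ++ Lrep L J R).Perm (J ++ L) := by
  rw [← Multiset.coe_eq_coe, ← Multiset.coe_add, ← Multiset.coe_add]
  set g := fun p => if p ∈ R then J.getD #{q ∈ R | q < p} 0 else L.getD p 0
  set P := (range L.length).val
  have hP : P.filter (· ∈ R) = R.val := by
    rw [← filter_val, filter_mem_eq_inter, inter_eq_right.2 hRL]
  have hJrep : (Jrep J L k R : Multiset ℕ) = R.val.map (L.getD · 0) + J.drop k := by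
    rw [Jrep, ← Multiset.coe_add, ← Multiset.map_coe, sort_eq]
  have hLrep : (Lrep L J R : Multiset ℕ) = R.val.map g + (P.filter (· ∉ R)).map g := by
    rw [← hP, ← Multiset.map_add, Multiset.filter_add_not, Lrep, ← Multiset.map_coe]; rfl
  have hJtake : R.val.map g = (J.take k : Multiset ℕ) := by
    rw [coe_take_eq_map_getD J hk, ← hR, ← image_card_filter_lt R,
      image_val_of_injOn (injOn_card_filter_lt R), Multiset.map_map]
    exact Multiset.map_congr rfl fun p hp => if_pos hp
  have hL : (L : Multiset ℕ) = R.val.map (L.getD · 0) + (P.filter (· ∉ R)).map g := by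
    rw [← L.take_length, coe_take_eq_map_getD L le_rfl, L.take_length,
      ← Multiset.filter_add_not (· ∈ R) (range L.length).val, Multiset.map_add, hP]
    congr 1
    exact Multiset.map_congr rfl fun p hp => (if_neg (Multiset.mem_filter.1 hp).2).symm
  have hJ : (J : Multiset ℕ) = J.take k + J.drop k := by
    rw [Multiset.coe_add, List.take_append_drop]
  rw [hJrep, hLrep, hJtake, hL, hJ]
  abel

lemma eq_of_mem_support_pseq_mul {l₁ l₂ : List ℕ} {m : Finset ℕ →₀ ℕ}
    (hm : m ∈ (pseq l₁ * pseq l₂).support) :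
    l₁.Nodup ∧ l₂.Nodup ∧ m = Finsupp.single l₁.toFinset 1 + Finsupp.single l₂.toFinset 1 := by
  unfold pseq at hm
  split_ifs at hm with h₁ h₂
  · rw [smul_mul_smul_comm, X, X, monomial_mul, one_mul, smul_monomial] at hm
    exact ⟨h₁, h₂, mem_singleton.1 (support_monomial_subset hm)⟩
  all_goals simp at hm

lemma exists_of_mem_support_pluecker {k : ℕ} {J L : List ℕ} (hk : k ≤ J.length)
    {m : Finset ℕ →₀ ℕ} (hm : m ∈ (pluecker k J L).support) :
    ∃ J' L' : List ℕ, J'.Nodup ∧ L'.Nodup ∧ J'.length = J.length ∧ L'.length = L.length ∧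
      (J' ++ L').Perm (J ++ L) ∧
      m = Finsupp.single J'.toFinset 1 + Finsupp.single L'.toFinset 1 := by
  rcases mem_union.1 (support_sub _ _ _ hm) with hm | hm
  · obtain ⟨h₁, h₂, rfl⟩ := eq_of_mem_support_pseq_mul hm
    exact ⟨J, L, h₁, h₂, rfl, rfl, .rfl, rfl⟩
  · obtain ⟨R, hR, hmR⟩ := mem_biUnion.1 (support_sum hm)
    obtain ⟨hRL, hRk⟩ := mem_powersetCard.1 hR
    obtain ⟨h₁, h₂, rfl⟩ := eq_of_mem_support_pseq_mul hmR
    exact ⟨_, _, h₁, h₂, length_Jrep J L R hRk hk, length_Lrep L J R,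
      Jrep_append_Lrep_perm J L hRL hRk hk, rfl⟩

lemma mwt_single_add_single (n : ℕ) (A B : Finset ℕ) :
    mwt n (Finsupp.single A 1 + Finsupp.single B 1) = wt n A + wt n B := by
  rw [mwt, Finsupp.sum_add_index' (fun _ => zero_mul _) fun _ _ _ => add_mul _ _ _,
    Finsupp.sum_single_index (zero_mul _), Finsupp.sum_single_index (zero_mul _), one_mul, one_mul]

lemma wt_add_ite_mem {n : ℕ} {A : Finset ℕ} (hA : A ⊆ seg n) :
    wt n A + (if n ∈ A then 1 else 0) = #{r ∈ A | #A ≤ r} := by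
  have hAn : #A ≤ n := by simpa [seg] using card_le_card hA
  have htop : {r ∈ {r ∈ A | #A ≤ r} | ¬ r ≤ n - 1} = {r ∈ A | r = n} := by
    ext r
    simp only [mem_filter]
    constructor
    · rintro ⟨⟨hr, -⟩, h⟩; exact ⟨hr, by have := mem_Icc.1 (hA hr); omega⟩
    · rintro ⟨hr, rfl⟩; exact ⟨⟨hr, hAn⟩, by have := mem_Icc.1 (hA hr); omega⟩
  rw [wt, ← card_filter_add_card_filter_not (s := {r ∈ A | #A ≤ r}) (· ≤ n - 1), htop,
    filter_filter, filter_eq', apply_ite card, card_singleton, card_empty]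

lemma one_le_card_filter_card_le {A : Finset ℕ} (h0 : 0 ∉ A) (hA : A.Nonempty) :
    1 ≤ #{r ∈ A | #A ≤ r} := by
  rw [Nat.one_le_iff_ne_zero, Ne, card_eq_zero, filter_eq_empty_iff]
  intro h
  have hsub : A ⊆ Icc 1 (#A - 1) := fun a ha => by
    have := h ha
    have : a ≠ 0 := fun h => h0 (h ▸ ha)
    simp only [mem_Icc]; omega
  have := card_le_card hsub
  rw [Nat.card_Icc] at this
  have := hA.card_pos
  omega

lemma card_filter_card_le_eq_one {A : Finset ℕ} (h0 : 0 ∉ A) (hA : A.Nonempty)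
    (hsub : Icc 1 (#A - 1) ⊆ A) : #{r ∈ A | #A ≤ r} = 1 := by
  have : {r ∈ A | #A ≤ r} = A \ Icc 1 (#A - 1) := by
    ext r
    simp only [mem_filter, mem_sdiff, mem_Icc]
    constructor
    · rintro ⟨hr, h⟩; exact ⟨hr, by omega⟩
    · rintro ⟨hr, h⟩; exact ⟨hr, by have : r ≠ 0 := fun h => h0 (h ▸ hr); omega⟩
  rw [this, card_sdiff_of_subset hsub, Nat.card_Icc]
  have := hA.card_pos
  omega

lemma card_filter_le_of_domLE {A B : Finset ℕ} (h : domLE A B) (j : ℕ) :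
    #{a ∈ A | j ≤ a} ≤ #{b ∈ B | j ≤ b} := by
  have key : ∀ {l₁ l₂ : List ℕ}, List.Forall₂ (· ≤ ·) l₁ l₂ →
      l₁.countP (j ≤ ·) ≤ l₂.countP (j ≤ ·) := by
    intro l₁ l₂ h
    induction h with
    | nil => simp
    | cons hab _ ih => simp only [List.countP_cons]; split_ifs <;> simp_all <;> omega
  simpa [← Multiset.coe_countP, Multiset.countP_eq_card_filter, card_def] using key h

lemma card_filter_image_seg (u : Equiv.Perm ℕ) (i j : ℕ) :
    #{r ∈ (seg i).image u | j ≤ r} = uij u i j := by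
  rw [filter_image, uij, card_image_of_injective _ u.injective]

lemma uij_of_coxeter {n : ℕ} {c : Equiv.Perm ℕ} (hc1 : c 1 = n)
    (hca : ∀ a, 2 ≤ a → a ≤ n → c a = a - 1) {s t : ℕ} (hst : s < t) (htn : t ≤ n) :
    uij c t (s + 1) = t - s := by
  have : {a ∈ seg t | s + 1 ≤ c a} = insert 1 (Icc (s + 2) t) := by
    ext a
    simp only [mem_filter, seg, mem_Icc, mem_insert]
    constructor
    · rintro ⟨⟨ha1, hat⟩, hc⟩
      rcases eq_or_ne a 1 with rfl | ha
      · exact .inl rfl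
      · rw [hca a (by omega) (by omega)] at hc; omega
    · rintro (rfl | ⟨hsa, hat⟩)
      · exact ⟨⟨le_rfl, by omega⟩, by omega⟩
      · exact ⟨⟨by omega, hat⟩, by rw [hca a (by omega) (by omega)]; omega⟩
  rw [uij, this, card_insert_of_notMem (by simp), Nat.card_Icc]
  omega

lemma Icc_subset_of_domLE {n : ℕ} {v c : Equiv.Perm ℕ} (hc1 : c 1 = n)
    (hca : ∀ a, 2 ≤ a → a ≤ n → c a = a - 1) (hvc : bruhatLE n v c)
    {A : Finset ℕ} (hA : A ⊆ seg n) (hdom : domLE A ((seg #A).image v)) :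
    Icc 1 (#A - 1) ⊆ A := by
  intro s hs
  simp only [mem_Icc] at hs
  have hAn : #A ≤ n := by simpa [seg] using card_le_card hA
  have hlarge : #{a ∈ A | s + 1 ≤ a} ≤ #A - s :=
    calc #{a ∈ A | s + 1 ≤ a} ≤ uij v #A (s + 1) :=
          card_filter_image_seg v #A (s + 1) ▸ card_filter_le_of_domLE hdom (s + 1)
      _ ≤ uij c #A (s + 1) :=
          hvc _ (mem_Icc.2 ⟨by omega, hAn⟩) _ (mem_Icc.2 ⟨by omega, by omega⟩)
      _ = #A - s := uij_of_coxeter hc1 hca (by omega) hAn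
  have hsmall : {a ∈ A | ¬ s + 1 ≤ a} = Icc 1 s := by
    refine eq_of_subset_of_card_le (fun a ha => ?_) ?_
    · have := hA (mem_filter.1 ha).1
      simp only [mem_filter, seg, mem_Icc] at ha this ⊢
      omega
    · have := card_filter_add_card_filter_not (s := A) (s + 1 ≤ ·)
      simp only [Nat.card_Icc]
      omega
  exact (mem_filter.1 (hsmall ▸ mem_Icc.2 ⟨hs.1, le_rfl⟩ : s ∈ {a ∈ A | ¬ s + 1 ≤ a})).1

lemma X_mem_vanishIdeal {n : ℕ} {w : Equiv.Perm ℕ} {I : Finset ℕ} (hI : ValidIndex n I)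
    (h : ¬ domLE I ((seg #I).image w)) : X I ∈ vanishIdeal n w :=
  Ideal.subset_span ⟨I, hI, h, rfl⟩

lemma sub_initw_mem {n : ℕ} {I : Ideal (MvPolynomial (Finset ℕ) ℂ)}
    {f : MvPolynomial (Finset ℕ) ℂ}
    (h : ∀ m ∈ f.support, ∀ m' ∈ f.support, mwt n m' < mwt n m → monomial m 1 ∈ I) :
    f - initw n f ∈ I := by
  have : f - initw n f =
      ∑ m ∈ f.support with ¬ ∀ m' ∈ f.support, mwt n m ≤ mwt n m', monomial m (coeff m f) := by
    nth_rewrite 1 [← support_sum_monomial_coeff f]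
    rw [initw, ← sum_filter_add_sum_filter_not f.support
      (fun m => ∀ m' ∈ f.support, mwt n m ≤ mwt n m')]
    abel
  rw [this]
  refine Ideal.sum_mem _ fun m hm => ?_
  obtain ⟨hm, hmin⟩ := mem_filter.1 hm
  push Not at hmin
  obtain ⟨m', hm', hlt⟩ := hmin
  rw [← mul_one (coeff m f), ← C_mul_monomial]
  exact Ideal.mul_mem_left _ _ (h m hm m' hm' hlt)

lemma exists_validIndex_of_mem_support_pluecker {n k : ℕ} {J L : List ℕ}
    (hval : ValidPair n k J L) {m : Finset ℕ →₀ ℕ} (hm : m ∈ (pluecker k J L).support) :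
    ∃ A B : Finset ℕ, m = Finsupp.single A 1 + Finsupp.single B 1 ∧
      ValidIndex n A ∧ ValidIndex n B ∧
      mwt n m + (J.count n + L.count n) = #{r ∈ A | #A ≤ r} + #{r ∈ B | #B ≤ r} := by
  obtain ⟨-, -, hJ, hL, hJ1, hJL, hLn, -, hk⟩ := hval
  obtain ⟨J', L', hJ', hL', hJJ', hLL', hperm, rfl⟩ := exists_of_mem_support_pluecker hk hm
  have hseg : ∀ a ∈ J' ++ L', a ∈ seg n := fun a ha =>
    (List.mem_append.1 (hperm.mem_iff.1 ha)).elim (hJ a) (hL a)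
  have hJ'seg : J'.toFinset ⊆ seg n := fun a ha => hseg a (by simp_all)
  have hL'seg : L'.toFinset ⊆ seg n := fun a ha => hseg a (by simp_all)
  have hJ'card : #J'.toFinset = J.length := by rw [List.toFinset_card_of_nodup hJ', hJJ']
  have hL'card : #L'.toFinset = L.length := by rw [List.toFinset_card_of_nodup hL', hLL']
  refine ⟨J'.toFinset, L'.toFinset, rfl, ⟨card_pos.1 (by omega), hJ'seg, by omega⟩,
    ⟨card_pos.1 (by omega), hL'seg, by omega⟩, ?_⟩
  rw [mwt_single_add_single, ← List.count_append, ← hperm.count_eq, List.count_append, hJ'.count,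
    hL'.count, ← wt_add_ite_mem hJ'seg, ← wt_add_ite_mem hL'seg]
  simp only [List.mem_toFinset]
  ring

lemma pluecker_sub_initw_mem_vanishIdeal {n : ℕ} {v c : Equiv.Perm ℕ} (hc1 : c 1 = n)
    (hca : ∀ a, 2 ≤ a → a ≤ n → c a = a - 1) (hvc : bruhatLE n v c) {k : ℕ} {J L : List ℕ}
    (hval : ValidPair n k J L) :
    pluecker k J L - initw n (pluecker k J L) ∈ vanishIdeal n v := by
  have hzero : ∀ {A}, ValidIndex n A → 0 ∉ A := fun hA h0 => by simpa [seg] using hA.2.1 h0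
  refine sub_initw_mem fun m hm m' hm' hlt => ?_
  obtain ⟨A, B, rfl, hA, hB, hAB⟩ := exists_validIndex_of_mem_support_pluecker hval hm
  obtain ⟨A', B', rfl, hA', hB', hAB'⟩ := exists_validIndex_of_mem_support_pluecker hval hm'
  by_contra hI
  rw [← one_mul (1 : ℂ), ← monomial_mul, ← X, ← X] at hI
  have hAdom : domLE A ((seg #A).image v) := by_contra fun h =>
    hI (Ideal.mul_mem_right _ _ (X_mem_vanishIdeal hA h))
  have hBdom : domLE B ((seg #B).image v) := by_contra fun h =>
    hI (Ideal.mul_mem_left _ _ (X_mem_vanishIdeal hB h))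
  have := card_filter_card_le_eq_one (hzero hA) hA.1
    (Icc_subset_of_domLE hc1 hca hvc hA.2.1 hAdom)
  have := card_filter_card_le_eq_one (hzero hB) hB.1
    (Icc_subset_of_domLE hc1 hca hvc hB.2.1 hBdom)
  have := one_le_card_filter_card_le (hzero hA') hA'.1
  have := one_le_card_filter_card_le (hzero hB') hB'.1
  omega

lemma span_sup_le_span_sup {R : Type*} [CommRing R] {S T : Set R} {I : Ideal R}
    (h : ∀ s ∈ S, ∃ t ∈ T, s - t ∈ I) : Ideal.span S ⊔ I ≤ Ideal.span T ⊔ I := by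
  refine sup_le (Ideal.span_le.2 fun s hs => ?_) le_sup_right
  obtain ⟨t, ht, hst⟩ := h s hs
  simpa using Ideal.add_mem _ (Ideal.mem_sup_left (Ideal.subset_span ht)) (Ideal.mem_sup_right hst)

theorem stmt_9_general (n : ℕ) (v c : Equiv.Perm ℕ)
    (hc1 : c 1 = n) (hca : ∀ a, 2 ≤ a → a ≤ n → c a = a - 1)
    (hvc : bruhatLE n v c) :
    schubIdeal n v = degIdeal n v := by
  have key {k J L} (hval : ValidPair n k J L) :=
    pluecker_sub_initw_mem_vanishIdeal hc1 hca hvc hval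
  refine le_antisymm (span_sup_le_span_sup ?_) (span_sup_le_span_sup ?_)
  · rintro _ ⟨k, J, L, hval, rfl⟩
    exact ⟨_, ⟨k, J, L, hval, rfl⟩, key hval⟩
  · rintro _ ⟨k, J, L, hval, rfl⟩
    exact ⟨_, ⟨k, J, L, hval, rfl⟩, sub_mem_comm_iff.1 (key hval)⟩

/-- for `v ≤ c` the Schubert ideal equals the degenerate Schubert ideal. -/
theorem stmt_9 (n : ℕ) (hn : 2 ≤ n) (v c : Equiv.Perm ℕ)
    (hvfix : ∀ a, a ∉ seg n → v a = a)
    (hc1 : c 1 = n) (hca : ∀ a, 2 ≤ a → a ≤ n → c a = a - 1)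
    (hcfix : ∀ a, a ∉ seg n → c a = a)
    (hvc : bruhatLE n v c) :
    schubIdeal n v = degIdeal n v :=
  stmt_9_general n v c hc1 hca hvc

end DegSchubert
end

section
/- Let n ≥ 2, m ∈ [n−1], and set x := s_m∘s_{m−1}∘⋯∘s_1 ∈ S_n (so x(1) = m+1, x(a) = a−1 for 2 ≤ a ≤ m+1, and x(a) = a for a > m+1). Let y_n ∈ S_{2n−2} be defined by y_n(1) = 1, y_n(2r) = r+1 for r ∈ [n−1], and y_n(2r−1) = n+r−1 for r ∈ [2, n−1]; let v := s̃_m∘s̃_{m−1}∘⋯∘s̃_1∘y_n ∈ S_{2n−2}, where s̃_i denotes the adjacent transposition (i, i+1) in S_{2n−2}. For k ∈ [n−1], define ρ_k : [n] → [k, n+k−1] by ρ_k(j) = j for j ∈ [k, n] and ρ_k(j) = j+n for j ∈ [k−1]. Then for every k ∈ [n−1], the map I ↦ [k−1] ∪ ρ_k(I) is a bijection from { I ⊆ [n] : #I = k and I ≤ x([k]) } onto { K ⊆ [2n−2] : #K = 2k−1, y_n([2k−1]) ≤ K, and K ≤ v([2k−1]) }, where ≤ denotes the componentwise order on equal-size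 subsets. (This is the combinatorial content, on the level of Plücker indices, of the identification ζ(X^a_{s_m⋯s_1}) = X̃^{y_n}_{s̃_m⋯s̃_1 y_n} of a degenerate Schubert variety with a Richardson variety in SL_{2n−2}/P.) -/
open Finset MvPolynomial

namespace DegSchubert

/-!
Write `p = k - 1`. Both sides are one-parameter families. A `k`-subset `I` of `[n]` lies above
`[k]` and below `x([k]) = [p] ∪ {M}`, `M = max k (m+1)`, while `y([2k-1]) = [p] ∪ {k} ∪ [n+1, n+p]`
and `v([2k-1]) = [p] ∪ {M} ∪ [n+1, n+p]`. Two sorted lists differing in a single position pin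
down every sorted list squeezed between them outside that position, so `I = [p] ∪ {j}` and
`K = [p] ∪ {j} ∪ [n+1, n+p]` with `k ≤ j ≤ M`, and `I ↦ [p] ∪ ρ_k(I)` matches the two members
with the same `j`.
-/

theorem forall₂_le_antisymm {α : Type*} [PartialOrder α] :
    ∀ {l s : List α}, List.Forall₂ (· ≤ ·) l s → List.Forall₂ (· ≤ ·) s l → l = s
  | _, _, .nil, _ => rfl
  | _, _, .cons hab h, .cons hba h' => by rw [le_antisymm hab hba, forall₂_le_antisymm h h']

theorem eq_append_cons_of_forall₂_le {α : Type*} [PartialOrder α] {a b : α} {B : List α} :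
    ∀ {A s : List α}, List.Forall₂ (· ≤ ·) (A ++ a :: B) s →
      List.Forall₂ (· ≤ ·) s (A ++ b :: B) → ∃ c, a ≤ c ∧ c ≤ b ∧ s = A ++ c :: B
  | [], _, .cons hac hB, .cons hcb hB' => ⟨_, hac, hcb, by rw [forall₂_le_antisymm hB' hB]; rfl⟩
  | _ :: _, _, .cons hx h, .cons hx' h' => by
    obtain ⟨c, hac, hcb, rfl⟩ := eq_append_cons_of_forall₂_le h h'
    exact ⟨c, hac, hcb, by rw [le_antisymm hx' hx]; rfl⟩

theorem forall₂_range'_le : ∀ {c : ℕ} {s : List ℕ}, s.Pairwise (· < ·) → (∀ a ∈ s, c ≤ a) →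
    List.Forall₂ (· ≤ ·) (List.range' c s.length) s
  | _, [], _, _ => .nil
  | _, a :: t, hs, hc => by
    rw [List.pairwise_cons] at hs
    refine .cons (hc a List.mem_cons_self) (forall₂_range'_le hs.2 fun b hb => ?_)
    have := hs.1 b hb
    have := hc a List.mem_cons_self
    omega

def blockSet (p j N d : ℕ) : Finset ℕ := Icc 1 p ∪ {j} ∪ Icc (N + 1) (N + d)

section blockSet

variable {p j N d : ℕ}

theorem sort_blockSet (hpj : p < j) (hjN : j ≤ N) :
    (blockSet p j N d).sort (· ≤ ·) = List.range' 1 p ++ j :: List.range' (N + 1) d := by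
  have hsorted : (List.range' 1 p ++ j :: List.range' (N + 1) d).Pairwise (· < ·) := by
    simp only [List.pairwise_append, List.pairwise_cons, List.mem_cons, List.mem_range'_1]
    refine ⟨List.pairwise_lt_range', ⟨fun _ h => by omega, List.pairwise_lt_range'⟩, ?_⟩
    rintro a ha b (rfl | hb) <;> omega
  have htoFinset : (List.range' 1 p ++ j :: List.range' (N + 1) d).toFinset = blockSet p j N d := by
    ext a
    simp only [blockSet, List.toFinset_append, List.toFinset_cons, List.toFinset_range'_1]
    simp only [mem_union, mem_insert, mem_Icc, mem_Ico, mem_singleton]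
    omega
  rw [← htoFinset, List.toFinset_sort _ hsorted.nodup]
  exact hsorted.imp le_of_lt

theorem card_blockSet (hpj : p < j) (hjN : j ≤ N) : (blockSet p j N d).card = p + 1 + d := by
  rw [← length_sort (· ≤ ·), sort_blockSet hpj hjN]
  simp only [List.length_append, List.length_range', List.length_cons]
  omega

theorem blockSet_subset_Icc {L : ℕ} (hpj : p < j) (hjL : j ≤ L) (hNL : N + d ≤ L) :
    blockSet p j N d ⊆ Icc 1 L := by
  intro a ha
  simp only [blockSet, mem_union, mem_Icc, mem_singleton] at ha ⊢
  omega

theorem domLE_blockSet_blockSet {a b : ℕ} (hpa : p < a) (hab : a ≤ b) (hbN : b ≤ N) :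
    domLE (blockSet p a N d) (blockSet p b N d) := by
  rw [domLE, sort_blockSet hpa (hab.trans hbN), sort_blockSet (hpa.trans_le hab) hbN]
  exact List.rel_append (List.forall₂_refl _) (.cons hab (List.forall₂_refl _))

theorem blockSet_succ_zero : blockSet p (p + 1) N 0 = Icc 1 (p + 1) := by
  ext a
  simp only [blockSet, mem_union, mem_Icc, mem_singleton]
  omega

theorem domLE_blockSet_succ_zero (hpN : p < N) {S : Finset ℕ} (hS : ∀ a ∈ S, 1 ≤ a)
    (hcard : S.card = p + 1) : domLE (blockSet p (p + 1) N 0) S := by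
  have h := forall₂_range'_le S.sortedLT_sort.pairwise fun a ha => hS a ((mem_sort _).1 ha)
  rw [length_sort, hcard, List.range'_concat] at h
  rw [domLE, sort_blockSet p.lt_succ_self hpN]
  simpa [add_comm] using h

end blockSet

def blockFamily (p M N d : ℕ) : Set (Finset ℕ) := (fun j => blockSet p j N d) '' Set.Ioc p M

section blockFamily

variable {p M N d : ℕ}

theorem mem_blockFamily_iff_domLE (hpM : p < M) (hMN : M ≤ N) {S : Finset ℕ} :
    S ∈ blockFamily p M N d ↔
      domLE (blockSet p (p + 1) N d) S ∧ domLE S (blockSet p M N d) := by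
  constructor
  · rintro ⟨c, ⟨hpc, hcM⟩, rfl⟩
    exact ⟨domLE_blockSet_blockSet p.lt_succ_self hpc (hcM.trans hMN),
      domLE_blockSet_blockSet hpc hcM hMN⟩
  · rintro ⟨hlo, hup⟩
    rw [domLE, sort_blockSet p.lt_succ_self (hpM.trans_le hMN)] at hlo
    rw [domLE, sort_blockSet hpM hMN] at hup
    obtain ⟨c, hpc, hcM, hS⟩ := eq_append_cons_of_forall₂_le hlo hup
    refine ⟨c, ⟨hpc, hcM⟩, ?_⟩
    rw [← sort_blockSet hpc (hcM.trans hMN)] at hS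
    rw [← sort_toFinset S (· ≤ ·), hS, sort_toFinset]

theorem mem_blockFamily_zero_iff_subset_card_domLE (hpM : p < M) (hMN : M ≤ N) {S : Finset ℕ} :
    S ∈ blockFamily p M N 0 ↔ S ⊆ Icc 1 N ∧ S.card = p + 1 ∧ domLE S (blockSet p M N 0) := by
  constructor
  · rintro ⟨c, ⟨hpc, hcM⟩, rfl⟩
    exact ⟨blockSet_subset_Icc hpc (hcM.trans hMN) le_rfl, card_blockSet hpc (hcM.trans hMN),
      domLE_blockSet_blockSet hpc hcM hMN⟩
  · rintro ⟨hsub, hcard, hup⟩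
    refine (mem_blockFamily_iff_domLE hpM hMN).2 ⟨?_, hup⟩
    exact domLE_blockSet_succ_zero (hpM.trans_le hMN) (fun a ha => (mem_Icc.1 (hsub ha)).1) hcard

theorem mem_blockFamily_iff_subset_card_domLE {L : ℕ} (hpM : p < M) (hMN : M ≤ N)
    (hNL : N + d ≤ L) {S : Finset ℕ} :
    S ∈ blockFamily p M N d ↔ S ⊆ Icc 1 L ∧ S.card = p + 1 + d ∧
      domLE (blockSet p (p + 1) N d) S ∧ domLE S (blockSet p M N d) := by
  refine ⟨fun h => ⟨?_, ?_, (mem_blockFamily_iff_domLE hpM hMN).1 h⟩,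
    fun h => (mem_blockFamily_iff_domLE hpM hMN).2 h.2.2⟩ <;>
  obtain ⟨c, ⟨hpc, hcM⟩, rfl⟩ := h
  · exact blockSet_subset_Icc hpc (by omega) hNL
  · exact card_blockSet hpc (hcM.trans hMN)

theorem Icc_union_image_blockSet {j : ℕ} (hpj : p < j) :
    Icc 1 p ∪ (blockSet p j N 0).image (fun a => if p + 1 ≤ a then a else a + N) =
      blockSet p j N p := by
  ext b
  simp only [blockSet, mem_union, mem_image, mem_Icc, mem_singleton]
  constructor
  · rintro (hb | ⟨a, ha, rfl⟩)
    · omega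
    · split_ifs <;> omega
  · rintro ((hb | rfl) | hb)
    · exact .inl hb
    · exact .inr ⟨b, by omega, if_pos hpj⟩
    · exact .inr ⟨b - N, by omega, by rw [if_neg (by omega)]; omega⟩

theorem blockSet_injOn : Set.InjOn (fun j => blockSet p j N d) (Set.Ioc p N) := by
  rintro a ⟨hpa, haN⟩ b ⟨hpb, hbN⟩ hab
  have ha : a ∈ blockSet p b N d := by
    rw [← show blockSet p a N d = blockSet p b N d from hab]
    simp [blockSet]
  simp only [blockSet, mem_union, mem_Icc, mem_singleton] at ha
  omega

theorem bijOn_blockFamily (hMN : M ≤ N) :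
    Set.BijOn (fun I => Icc 1 p ∪ I.image fun a => if p + 1 ≤ a then a else a + N)
      (blockFamily p M N 0) (blockFamily p M N p) := by
  refine ⟨?_, ?_, ?_⟩
  · rintro _ ⟨j, hj, rfl⟩
    exact ⟨j, hj, (Icc_union_image_blockSet hj.1).symm⟩
  · rintro _ ⟨a, ha, rfl⟩ _ ⟨b, hb, rfl⟩ hab
    simp only [Icc_union_image_blockSet ha.1, Icc_union_image_blockSet hb.1] at hab
    rw [blockSet_injOn ⟨ha.1, ha.2.trans hMN⟩ ⟨hb.1, hb.2.trans hMN⟩ hab]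
  · rintro _ ⟨j, hj, rfl⟩
    exact ⟨_, ⟨j, hj, rfl⟩, Icc_union_image_blockSet hj.1⟩

end blockFamily

def IsRotation (m : ℕ) (u : Equiv.Perm ℕ) : Prop :=
  u 1 = m + 1 ∧ (∀ a, 2 ≤ a → a ≤ m + 1 → u a = a - 1) ∧ ∀ a, m + 1 < a → u a = a

theorem isRotation_prod_swap (m : ℕ) :
    IsRotation m ((List.range m).map fun t => Equiv.swap (m - t) (m - t + 1)).prod := by
  induction m with
  | zero => exact ⟨by simp, fun a h₁ h₂ => by omega, fun a _ => by simp⟩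
  | succ m ih =>
    obtain ⟨ih₁, ih₂, ih₃⟩ := ih
    have hcons : (List.range (m + 1)).map (fun t => Equiv.swap (m + 1 - t) (m + 1 - t + 1)) =
        Equiv.swap (m + 1) (m + 2) ::
          (List.range m).map fun t => Equiv.swap (m - t) (m - t + 1) := by
      rw [List.range_succ_eq_map, List.map_cons, List.map_map]
      refine congrArg _ (List.map_congr_left fun t _ => ?_)
      simp only [Function.comp_apply]
      congr 1 <;> omega
    rw [hcons, List.prod_cons]
    refine ⟨?_, fun a h₁ h₂ => ?_, fun a h => ?_⟩ <;> rw [Equiv.Perm.mul_apply]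
    · rw [ih₁, Equiv.swap_apply_left]
    · obtain h | rfl : a < m + 2 ∨ a = m + 2 := by omega
      · rw [ih₂ a h₁ (by omega), Equiv.swap_apply_of_ne_of_ne (by omega) (by omega)]
      · rw [ih₃ _ (by omega), Equiv.swap_apply_right]
        rfl
    · rw [ih₃ a (by omega), Equiv.swap_apply_of_ne_of_ne (by omega) (by omega)]

theorem IsRotation.image_blockSet {m p N d : ℕ} {u : Equiv.Perm ℕ} (hu : IsRotation m u)
    (hmN : m + 1 ≤ N) :
    (blockSet p (p + 1) N d).image u = blockSet p (max (p + 1) (m + 1)) N d := by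
  obtain ⟨hu₁, hu₂, hu₃⟩ := hu
  ext b
  simp only [blockSet, mem_image, mem_union, mem_Icc, mem_singleton]
  constructor
  · rintro ⟨a, ha, rfl⟩
    obtain rfl | ⟨h₁, h₂⟩ | h : a = 1 ∨ (2 ≤ a ∧ a ≤ m + 1) ∨ m + 1 < a := by omega
    · rw [hu₁]; omega
    · rw [hu₂ a h₁ h₂]; omega
    · rw [hu₃ a h]; omega
  · intro hb
    obtain h | rfl | h : b ≤ m ∨ b = m + 1 ∨ m + 1 < b := by omega
    · exact ⟨b + 1, by omega, by rw [hu₂ _ (by omega) (by omega)]; rfl⟩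
    · exact ⟨1, by omega, hu₁⟩
    · exact ⟨b, by omega, hu₃ b h⟩

theorem image_Icc_eq_blockSet {n p : ℕ} {y : Equiv.Perm ℕ} (hy1 : y 1 = 1)
    (hy2 : ∀ r ∈ seg (n - 1), y (2 * r) = r + 1)
    (hy3 : ∀ r, 2 ≤ r → r ≤ n - 1 → y (2 * r - 1) = n + r - 1) (hpn : p + 1 ≤ n - 1) :
    (Icc 1 (2 * p + 1)).image y = blockSet p (p + 1) n p := by
  have hodd : ∀ r, 1 ≤ r → r ≤ p → y (2 * r + 1) = n + r := fun r h₁ h₂ => by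
    rw [show 2 * r + 1 = 2 * (r + 1) - 1 by omega, hy3 (r + 1) (by omega) (by omega)]
    omega
  ext b
  simp only [blockSet, mem_image, mem_union, mem_Icc, mem_singleton]
  constructor
  · rintro ⟨a, ha, rfl⟩
    obtain ⟨r, rfl | rfl⟩ := Nat.even_or_odd' a
    · rw [hy2 r (mem_Icc.2 ⟨by omega, by omega⟩)]; omega
    · obtain rfl | hr := Nat.eq_zero_or_pos r
      · rw [hy1]; omega
      · rw [hodd r hr (by omega)]; omega
  · intro hb
    obtain rfl | h | h : b = 1 ∨ (2 ≤ b ∧ b ≤ p + 1) ∨ n + 1 ≤ b := by omega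
    · exact ⟨1, by omega, hy1⟩
    · exact ⟨2 * (b - 1), by omega, by rw [hy2 _ (mem_Icc.2 ⟨by omega, by omega⟩)]; omega⟩
    · exact ⟨2 * (b - n) + 1, by omega, by rw [hodd _ (by omega) (by omega)]; omega⟩

theorem stmt_18_general (n : ℕ) (m : ℕ) (hm : m ∈ seg (n - 1))
    (x : Equiv.Perm ℕ) (hx1 : x 1 = m + 1) (hx2 : ∀ a, 2 ≤ a → a ≤ m + 1 → x a = a - 1)
    (hx3 : ∀ a, m + 1 < a → x a = a)
    (y : Equiv.Perm ℕ) (hy1 : y 1 = 1) (hy2 : ∀ r ∈ seg (n - 1), y (2 * r) = r + 1)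
    (hy3 : ∀ r, 2 ≤ r → r ≤ n - 1 → y (2 * r - 1) = n + r - 1) :
    ∀ k ∈ seg (n - 1),
      Set.BijOn
        (fun I : Finset ℕ => Finset.Icc 1 (k - 1) ∪ I.image (fun j => if k ≤ j then j else j + n))
        {I : Finset ℕ | I ⊆ seg n ∧ I.card = k ∧ domLE I ((seg k).image ⇑x)}
        {K : Finset ℕ | K ⊆ seg (2 * n - 2) ∧ K.card = 2 * k - 1 ∧
          domLE ((seg (2 * k - 1)).image ⇑y) K ∧
          domLE K ((seg (2 * k - 1)).image
            ⇑((((List.range m).map (fun t => Equiv.swap (m - t) (m - t + 1))).prod) * y))} := by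
  intro k hk
  have hmn : m + 1 ≤ n := by simp only [seg, mem_Icc] at hm; omega
  obtain ⟨p, rfl, hpn⟩ : ∃ p, k = p + 1 ∧ p + 1 ≤ n - 1 := by
    simp only [seg, mem_Icc] at hk; exact ⟨k - 1, by omega, by omega⟩
  set v := ((List.range m).map fun t => Equiv.swap (m - t) (m - t + 1)).prod * y
  set M := max (p + 1) (m + 1)
  have hM : p < M ∧ M ≤ n := by omega
  have hx : (seg (p + 1)).image x = blockSet p M n 0 := by
    rw [seg, ← blockSet_succ_zero (N := n), IsRotation.image_blockSet ⟨hx1, hx2, hx3⟩ hmn]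
  have hy : (seg (2 * (p + 1) - 1)).image y = blockSet p (p + 1) n p := by
    rw [seg, show 2 * (p + 1) - 1 = 2 * p + 1 by omega]
    exact image_Icc_eq_blockSet hy1 hy2 hy3 hpn
  have hv : (seg (2 * (p + 1) - 1)).image v = blockSet p M n p := by
    rw [Equiv.Perm.coe_mul, ← image_image, hy, (isRotation_prod_swap m).image_blockSet hmn]
  rw [hx, hy, hv, Nat.add_sub_cancel, show 2 * (p + 1) - 1 = p + 1 + p by omega]
  convert bijOn_blockFamily hM.2 using 1 <;> ext S
  · exact (mem_blockFamily_zero_iff_subset_card_domLE hM.1 hM.2).symm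
  · exact (mem_blockFamily_iff_subset_card_domLE hM.1 hM.2 (by omega)).symm

/-- combinatorial bijection underlying the identification of the degenerate
Schubert variety `X^a_{s_m⋯s_1}` with a Richardson variety in `SL_{2n−2}/P`. -/
theorem stmt_18 (n : ℕ) (hn : 2 ≤ n) (m : ℕ) (hm : m ∈ seg (n - 1))
    (x : Equiv.Perm ℕ) (hx1 : x 1 = m + 1) (hx2 : ∀ a, 2 ≤ a → a ≤ m + 1 → x a = a - 1)
    (hx3 : ∀ a, m + 1 < a → x a = a)
    (y : Equiv.Perm ℕ) (hy1 : y 1 = 1) (hy2 : ∀ r ∈ seg (n - 1), y (2 * r) = r + 1)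
    (hy3 : ∀ r, 2 ≤ r → r ≤ n - 1 → y (2 * r - 1) = n + r - 1) :
    ∀ k ∈ seg (n - 1),
      Set.BijOn
        (fun I : Finset ℕ => Finset.Icc 1 (k - 1) ∪ I.image (fun j => if k ≤ j then j else j + n))
        {I : Finset ℕ | I ⊆ seg n ∧ I.card = k ∧ domLE I ((seg k).image ⇑x)}
        {K : Finset ℕ | K ⊆ seg (2 * n - 2) ∧ K.card = 2 * k - 1 ∧
          domLE ((seg (2 * k - 1)).image ⇑y) K ∧
          domLE K ((seg (2 * k - 1)).image
            ⇑((((List.range m).map (fun t => Equiv.swap (m - t) (m - t + 1))).prod) * y))} :=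
  stmt_18_general n m hm x hx1 hx2 hx3 y hy1 hy2 hy3

end DegSchubert
end

section
/- Let i ≥ 2, n = 2i−1, let w_0 ∈ S_n be the longest element (w_0(a) = n+1−a), and set w := w_0∘s_i ∈ S_n. (a) For every k ∈ [n−1] and every k-element subset J ⊆ [n]: J ≰ w([k]) if and only if k = i and J = [i, n]. (b) Let w_n ∈ S_{2n−2} be defined by w_n(2r) = r and w_n(2r−1) = n+r−1 for r ∈ [n−1], and let s̃_{2i−1} ∈ S_{2n−2} be the adjacent transposition (2i−1, 2i). For every k ∈ [n−1] and every (2k−1)-element subset K ⊆ [2n−2] with K ≤ w_n([2k−1]): K ≱ s̃_{2i−1}([2k−1]) if and only if k = i and K = [2i−1]. (These two equivalences constitute the combinatorial content of the identification ζ(X^a_{w_0 s_i}) = X̃^{s̃_{2i−1}}_{w_n} of the degenerate Schubert divisor with a Richardson variety in SL_{2n−2}/P for odd n.) -/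
open Finset MvPolynomial

namespace DegSchubert

/-!
Both parts reduce to computing the relevant images of `[k]` and comparing sorted sequences
entrywise. For `k ≠ i` the transposition does not move `[k]`, so `w([k])` is the top interval
`[n+1-k, n]`, which dominates every `k`-subset of `[n]`; likewise `s̃_{2i-1}([2k-1]) = [2k-1]` is
dominated by every `(2k-1)`-subset of positive integers. For `k = i`, `w([i]) = {i-1} ∪ [i+1, n]`
differs from the top interval only in its least entry, so `J ≤ w([i])` fails exactly when the
least entry of `J` exceeds `i - 1`, i.e. `J = [i, n]`; dually `s̃_{2i-1}([2i-1]) = [2i-2] ∪ {2i}`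
differs from `[2i-1]` only in its largest entry.
-/

theorem image_eq_of_mapsTo {α β : Type*} [DecidableEq β] {f : α → β}
    (hf : Function.Injective f) {s : Finset α} {t : Finset β} (hst : ∀ a ∈ s, f a ∈ t)
    (hcard : t.card = s.card) : s.image f = t :=
  eq_of_subset_of_card_le (image_subset_iff.2 hst) (by rw [card_image_of_injective s hf, hcard])

theorem apply_add_sub_le_of_strictMono {k : ℕ} {f : Fin k → ℕ} (hf : StrictMono f)
    {s t : Fin k} (hst : s ≤ t) : f s + (t - s : ℕ) ≤ f t := by
  have h := card_le_card_of_injOn f (s := Icc s t) (t := Icc (f s) (f t))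
    (fun x hx => by
      simp only [coe_Icc, Set.mem_Icc] at hx ⊢
      exact ⟨hf.monotone hx.1, hf.monotone hx.2⟩)
    hf.injective.injOn
  simp only [Fin.card_Icc, Nat.card_Icc] at h
  omega

section OrderEmbOfFin

variable {s : Finset ℕ} {k : ℕ} (h : s.card = k)

theorem add_le_orderEmbOfFin {c : ℕ} (hc : ∀ a ∈ s, c ≤ a) (t : Fin k) :
    c + t ≤ s.orderEmbOfFin h t := by
  have hmono := apply_add_sub_le_of_strictMono (s.orderEmbOfFin h).strictMono
    (show (⟨0, t.pos⟩ : Fin k) ≤ t from Nat.zero_le _)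
  have := hc _ (orderEmbOfFin_mem s h ⟨0, t.pos⟩)
  simp only at hmono
  omega

theorem orderEmbOfFin_add_le {m : ℕ} (hm : ∀ a ∈ s, a ≤ m) (t : Fin k) :
    s.orderEmbOfFin h t + (k - 1 - t) ≤ m := by
  have hmono := apply_add_sub_le_of_strictMono (s.orderEmbOfFin h).strictMono
    (show t ≤ (⟨k - 1, Nat.sub_one_lt_of_lt t.2⟩ : Fin k) from Nat.le_sub_one_of_lt t.2)
  have := hm _ (orderEmbOfFin_mem s h ⟨k - 1, Nat.sub_one_lt_of_lt t.2⟩)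
  simp only at hmono
  omega

end OrderEmbOfFin

theorem orderEmbOfFin_Icc {a b k : ℕ} (h : (Icc a b).card = k) (t : Fin k) :
    (Icc a b).orderEmbOfFin h t = a + t := by
  have hlo := add_le_orderEmbOfFin h (fun x hx => (mem_Icc.1 hx).1) t
  have hhi := orderEmbOfFin_add_le h (fun x hx => (mem_Icc.1 hx).2) t
  rw [Nat.card_Icc] at h
  have := t.2
  omega

theorem domLE_iff_forall_orderEmbOfFin_le {A B : Finset ℕ} {k : ℕ} (hA : A.card = k)
    (hB : B.card = k) : domLE A B ↔ ∀ t, A.orderEmbOfFin hA t ≤ B.orderEmbOfFin hB t := by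
  simp only [domLE, List.forall₂_iff_get, orderEmbOfFin_apply, length_sort, hA, hB, true_and]
  exact ⟨fun h t => h t t.2 t.2, fun h t ht _ => h ⟨t, ht⟩⟩

theorem domLE_Icc_top {J : Finset ℕ} {m k : ℕ} (hJ : ∀ a ∈ J, a ≤ m) (hk : J.card = k) :
    domLE J (Icc (m + 1 - k) m) := by
  have hkm : k ≤ m + 1 :=
    hk ▸ (card_le_card fun a ha => mem_range.2 (Nat.lt_succ_of_le (hJ a ha))).trans_eq
      (card_range _)
  have hI : (Icc (m + 1 - k) m).card = k := by rw [Nat.card_Icc]; omega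
  rw [domLE_iff_forall_orderEmbOfFin_le hk hI]
  intro t
  have := orderEmbOfFin_add_le hk hJ t
  rw [orderEmbOfFin_Icc]
  omega

theorem Icc_one_domLE {K : Finset ℕ} {d : ℕ} (hK : ∀ a ∈ K, 1 ≤ a) (hd : K.card = d) :
    domLE (Icc 1 d) K := by
  rw [domLE_iff_forall_orderEmbOfFin_le (by rw [Nat.card_Icc, Nat.add_sub_cancel]) hd]
  intro t
  rw [orderEmbOfFin_Icc]
  exact add_le_orderEmbOfFin hd hK t

theorem domLE_insert_Icc_top_iff {J : Finset ℕ} {m k : ℕ} (hJ : ∀ a ∈ J, a ≤ m)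
    (hk : J.card = k) (hk1 : 1 ≤ k) (hkm : k ≤ m) :
    domLE J (insert (m - k) (Icc (m + 2 - k) m)) ↔ J ≠ Icc (m + 1 - k) m := by
  set B := insert (m - k) (Icc (m + 2 - k) m)
  have hB : B.card = k := by
    rw [card_insert_of_notMem (by simp only [mem_Icc]; omega), Nat.card_Icc]
    omega
  have hembB : ⇑(B.orderEmbOfFin hB) = fun t : Fin k => if (t : ℕ) = 0 then m - k else m + 1 - k + t := by
    refine (orderEmbOfFin_unique hB (fun t => ?_) fun t u htu => ?_).symm
    · simp only [B, mem_insert, mem_Icc]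
      split_ifs <;> omega
    · have : (t : ℕ) < u := htu
      split_ifs <;> omega
  have hmin := orderEmbOfFin_zero hk hk1
  rw [domLE_iff_forall_orderEmbOfFin_le hk hB, hembB]
  constructor
  · rintro h rfl
    have := h ⟨0, hk1⟩
    rw [orderEmbOfFin_Icc] at this
    simp only [if_true] at this
    omega
  · intro hne t
    dsimp only
    split_ifs with ht0
    · obtain ⟨a, ha, haI⟩ := not_subset.1 fun hsub =>
        hne (eq_of_subset_of_card_le hsub (by rw [hk, Nat.card_Icc]; omega))
      have := hJ a ha
      rw [mem_Icc] at haI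
      rw [show t = ⟨0, hk1⟩ from Fin.ext ht0, hmin]
      exact (min'_le J a ha).trans (by omega)
    · have := orderEmbOfFin_add_le hk hJ t
      omega

theorem insert_Icc_one_domLE_iff {K : Finset ℕ} {d : ℕ} (hK : ∀ a ∈ K, 1 ≤ a)
    (hd : K.card = d) (hd1 : 1 ≤ d) :
    domLE (insert (d + 1) (Icc 1 (d - 1))) K ↔ K ≠ Icc 1 d := by
  set B := insert (d + 1) (Icc 1 (d - 1))
  have hB : B.card = d := by
    rw [card_insert_of_notMem (by simp only [mem_Icc]; omega), Nat.card_Icc]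
    omega
  have hembB : ⇑(B.orderEmbOfFin hB) = fun t : Fin d => if (t : ℕ) = d - 1 then d + 1 else 1 + t := by
    refine (orderEmbOfFin_unique hB (fun t => ?_) fun t u htu => ?_).symm
    · have := t.2
      simp only [B, mem_insert, mem_Icc]
      split_ifs <;> omega
    · have : (t : ℕ) < u := htu
      have := u.2
      split_ifs <;> omega
  have hmax := orderEmbOfFin_last hd hd1
  rw [domLE_iff_forall_orderEmbOfFin_le hB hd, hembB]
  constructor
  · rintro h rfl
    have := h ⟨d - 1, by omega⟩
    rw [orderEmbOfFin_Icc] at this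
    simp only [if_true] at this
    omega
  · intro hne t
    dsimp only
    split_ifs with ht
    · obtain ⟨a, ha, haI⟩ := not_subset.1 fun hsub =>
        hne (eq_of_subset_of_card_le hsub (by rw [hd, Nat.card_Icc]; omega))
      have := hK a ha
      rw [mem_Icc] at haI
      rw [show t = ⟨d - 1, by omega⟩ from Fin.ext ht, hmax]
      exact le_trans (by omega) (le_max' K a ha)
    · exact add_le_orderEmbOfFin hd hK t

theorem image_Icc_swap_of_ne {d j : ℕ} (hj : 1 ≤ j) (hjd : j ≠ d) :
    (Icc 1 d).image (Equiv.swap j (j + 1)) = Icc 1 d :=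
  image_eq_of_mapsTo (Equiv.injective _)
    (fun a ha => by
      rw [mem_Icc] at ha ⊢
      rw [Equiv.swap_apply_def]
      split_ifs <;> omega)
    rfl

theorem image_Icc_swap_self {d : ℕ} (hd : 1 ≤ d) :
    (Icc 1 d).image (Equiv.swap d (d + 1)) = insert (d + 1) (Icc 1 (d - 1)) :=
  image_eq_of_mapsTo (Equiv.injective _)
    (fun a ha => by
      rw [mem_Icc] at ha
      rw [mem_insert, mem_Icc, Equiv.swap_apply_def]
      split_ifs <;> omega)
    (by rw [card_insert_of_notMem (by simp only [mem_Icc]; omega), Nat.card_Icc, Nat.card_Icc]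
        omega)

theorem image_Icc_of_reverse {w : Equiv.Perm ℕ} {n k : ℕ} (hw : ∀ a ∈ seg n, w a = n + 1 - a)
    (hk : k ≤ n) : (Icc 1 k).image w = Icc (n + 1 - k) n :=
  image_eq_of_mapsTo w.injective
    (fun a ha => by
      rw [mem_Icc] at ha ⊢
      rw [hw a (mem_Icc.2 ⟨ha.1, ha.2.trans hk⟩)]
      omega)
    (by rw [Nat.card_Icc, Nat.card_Icc]; omega)

theorem stmt_19_general (i : ℕ) (n : ℕ) (hn : n = 2 * i - 1)
    (w₀ : Equiv.Perm ℕ) (hw₀ : ∀ a ∈ seg n, w₀ a = n + 1 - a)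
    (wn : Equiv.Perm ℕ) :
    (∀ k ∈ seg (n - 1), ∀ J : Finset ℕ, J ⊆ seg n → J.card = k →
      (¬ domLE J ((seg k).image ⇑(w₀ * Equiv.swap i (i + 1))) ↔
        (k = i ∧ J = Finset.Icc i n))) ∧
    (∀ k ∈ seg (n - 1), ∀ K : Finset ℕ, K ⊆ seg (2 * n - 2) → K.card = 2 * k - 1 →
      domLE K ((seg (2 * k - 1)).image ⇑wn) →
      (¬ domLE ((seg (2 * k - 1)).image ⇑(Equiv.swap (2 * i - 1) (2 * i))) K ↔
        (k = i ∧ K = Finset.Icc 1 (2 * i - 1)))) := by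
  constructor
  · intro k hk J hJ hJk
    rw [seg, mem_Icc] at hk
    have hJn : ∀ a ∈ J, a ≤ n := fun a ha => (mem_Icc.1 (hJ ha)).2
    rw [Equiv.Perm.coe_mul, ← image_image, seg]
    by_cases hki : k = i
    · subst hki
      rw [image_Icc_swap_self (by omega), image_insert, image_Icc_of_reverse hw₀ (by omega),
        hw₀ _ (mem_Icc.2 (by omega)), show n + 1 - (k + 1) = n - k by omega,
        show n + 1 - (k - 1) = n + 2 - k by omega, domLE_insert_Icc_top_iff hJn hJk (by omega)
        (by omega), show n + 1 - k = k by omega]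
      simp
    · rw [image_Icc_swap_of_ne (by omega) (Ne.symm hki), image_Icc_of_reverse hw₀ (by omega)]
      exact iff_of_false (not_not_intro (domLE_Icc_top hJn hJk)) fun h => hki h.1
  · intro k hk K hK hKk _
    rw [seg, mem_Icc] at hk
    have hK1 : ∀ a ∈ K, 1 ≤ a := fun a ha => (mem_Icc.1 (hK ha)).1
    obtain ⟨d, hd, h2i⟩ : ∃ d, 2 * i - 1 = d ∧ 2 * i = d + 1 := ⟨_, rfl, by omega⟩
    rw [seg, hd, h2i]
    by_cases hki : k = i
    · rw [hki, hd] at hKk ⊢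
      rw [image_Icc_swap_self (by omega), insert_Icc_one_domLE_iff hK1 hKk (by omega)]
      simp
    · rw [image_Icc_swap_of_ne (by omega) (by omega)]
      exact iff_of_false (not_not_intro (Icc_one_domLE hK1 hKk)) fun h => hki h.1

/-- the combinatorics of the identification of the degenerate Schubert divisor
`X^a_{w₀ s_i}` (for `n = 2i−1`) with a Richardson variety in `SL_{2n−2}/P`. -/
theorem stmt_19 (i : ℕ) (hi : 2 ≤ i) (n : ℕ) (hn : n = 2 * i - 1)
    (w₀ : Equiv.Perm ℕ) (hw₀ : ∀ a ∈ seg n, w₀ a = n + 1 - a)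
    (hw₀fix : ∀ a, a ∉ seg n → w₀ a = a)
    (wn : Equiv.Perm ℕ) (hwn1 : ∀ r ∈ seg (n - 1), wn (2 * r) = r)
    (hwn2 : ∀ r ∈ seg (n - 1), wn (2 * r - 1) = n + r - 1) :
    (∀ k ∈ seg (n - 1), ∀ J : Finset ℕ, J ⊆ seg n → J.card = k →
      (¬ domLE J ((seg k).image ⇑(w₀ * Equiv.swap i (i + 1))) ↔
        (k = i ∧ J = Finset.Icc i n))) ∧
    (∀ k ∈ seg (n - 1), ∀ K : Finset ℕ, K ⊆ seg (2 * n - 2) → K.card = 2 * k - 1 →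
      domLE K ((seg (2 * k - 1)).image ⇑wn) →
      (¬ domLE ((seg (2 * k - 1)).image ⇑(Equiv.swap (2 * i - 1) (2 * i))) K ↔
        (k = i ∧ K = Finset.Icc 1 (2 * i - 1)))) :=
  stmt_19_general i n hn w₀ hw₀ wn

end DegSchubert
end
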